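/- arXiv:1202.4560 — 5 statements merged into one kernel-verified Lean document; each statement's English description precedes it below -/
import Mathlib

section
/- Let r, s be real numbers such that nr + ms ∉ ℤ for every pair of integers (n,m) ≠ (0,0), and let T be the plane translation T(x,y) = (x+r, y+s) (so the induced rotation of the torus ℝ²/ℤ² is ergodic for Lebesgue measure). Then for every exchange of pieces R conjugate to T and every integer n ≥ 1, the complexity satisfies p_R(n) ≥ 2n+1. In particular the complexity function associated to T (the infimum of p_R(n) over all exchanges of pieces R conjugate to T) is at least 2n+1 for every n. -/
open MeasureTheory Filter Topology

noncomputable section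

/-- The inclusion of `ℤ × ℤ` into `ℝ × ℝ`. -/
def latVec (v : ℤ × ℤ) : ℝ × ℝ := ((v.1 : ℝ), (v.2 : ℝ))

/-- An exchange of `m` pieces of the plane adapted to a measurable map `T` of the plane:
measurable pieces `D i`, pairwise almost disjoint, whose union has Lebesgue measure 1 and is
almost surely a fundamental domain for `ℤ²`, together with integer vectors `vec i` and the
exchange map `R` acting on the union of the pieces by `R x = T x - vec i` for `x ∈ D i`,
preserving Lebesgue measure.  `C` is the coding map: `C x k` records the piece containing
`R^[k] x`. -/
structure PieceExchange (T : ℝ × ℝ → ℝ × ℝ) (m : ℕ) where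
  D : Fin m → Set (ℝ × ℝ)
  vec : Fin m → ℤ × ℤ
  R : ℝ × ℝ → ℝ × ℝ
  C : ℝ × ℝ → ℕ → Fin m
  measD : ∀ i, MeasurableSet (D i)
  aeDisjoint : ∀ i j, i ≠ j → volume (D i ∩ D j) = 0
  measure_union : volume (⋃ i, D i) = 1
  fundamental :
    volume {x | x ∈ ⋃ i, D i ∧ ∃ y ∈ ⋃ i, D i, y ≠ x ∧ ∃ a b : ℤ, x - y = ((a : ℝ), (b : ℝ))} = 0
  measR : Measurable R
  measC : Measurable C
  mem_code : ∀ x ∈ ⋃ i, D i, ∀ k : ℕ, R^[k] x ∈ D (C x k)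
  R_eq : ∀ x ∈ ⋃ i, D i, ∀ k : ℕ, R (R^[k] x) = T (R^[k] x) - latVec (vec (C x k))
  meas_pres : ∀ A : Set (ℝ × ℝ), MeasurableSet A →
    volume ((⋃ i, D i) ∩ R ⁻¹' A) = volume ((⋃ i, D i) ∩ A)

namespace PieceExchange

variable {T : ℝ × ℝ → ℝ × ℝ} {m : ℕ}

/-- The domain of the exchange: the union of the pieces. -/
def domain (E : PieceExchange T m) : Set (ℝ × ℝ) := ⋃ i, E.D i

/-- The exchange is conjugate to `T` when the coding map is injective off a Lebesgue-null set. -/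
def Conjugate (E : PieceExchange T m) : Prop :=
  volume {x | x ∈ E.domain ∧ ∃ y ∈ E.domain, y ≠ x ∧ E.C y = E.C x} = 0

/-- The language of the exchange: all finite factors of coding sequences. -/
def lang (E : PieceExchange T m) : Set (List (Fin m)) :=
  {w | ∃ n k : ℕ, ∃ x ∈ E.domain, w = (List.range n).map fun j => E.C x (k + j)}

/-- The complexity of the exchange: the number of words of length `n` in its language. -/
def complexity (E : PieceExchange T m) (n : ℕ) : ℕ :=
  Nat.card {w : List (Fin m) // w ∈ E.lang ∧ w.length = n}

end PieceExchange

/-- The complexity function associated to `T`: the infimum of the complexities of the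
exchanges of pieces conjugate to `T` (`⊤` if there is no such exchange). -/
def complexityFn (T : ℝ × ℝ → ℝ × ℝ) (n : ℕ) : ℕ∞ :=
  ⨅ (m : ℕ) (E : PieceExchange T m) (_ : E.Conjugate), (E.complexity n : ℕ∞)


/-!
Code each point by the pieces its orbit visits, and call a word *positive* when the points whose
coding begins with it have positive measure. There is one positive word of length `0`, and
passing from length `k` to `k + 1` adds at least two. Otherwise at most one positive word `ws`
of length `k` has two right extensions and all others have one, so along almost every orbit the
coding is eventually a concatenation of at most two blocks (the returns to `ws`, or a period).
A letter `i` moves a point by `(r, s) - 𝐧ᵢ`, so a block of length `ℓ` moves it by a vector of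
`ℓ (r, s) + ℤ²`; by non-resonance `0` is not on the segment joining the two block vectors, hence
`‖Rⁿ x - x‖` grows linearly for almost every `x`. This is impossible for a measure-preserving
map of a probability space: a ball of mass `3/4` meets its preimage under `Rⁿ` in a set of mass
at least `1/2`, whatever `n`.
-/

def intLattice : AddSubgroup (ℝ × ℝ) :=
  ((Int.castAddHom ℝ).prodMap (Int.castAddHom ℝ)).range

lemma latVec_mem_intLattice (L : ℤ × ℤ) : latVec L ∈ intLattice := ⟨L, rfl⟩

lemma exists_eq_of_mem_intLattice {v : ℝ × ℝ} (hv : v ∈ intLattice) :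
    ∃ p q : ℤ, v = ((p : ℝ), (q : ℝ)) := by
  obtain ⟨⟨p, q⟩, rfl⟩ := hv
  exact ⟨p, q, rfl⟩

def NonResonant (r s : ℝ) : Prop :=
  ∀ p q : ℤ, (p, q) ≠ (0, 0) → ∀ k : ℤ, (p : ℝ) * r + (q : ℝ) * s ≠ (k : ℝ)

namespace NonResonant

variable {r s : ℝ}

lemma eq_zero (h : NonResonant r s) {p q k : ℤ} (hk : (p : ℝ) * r + (q : ℝ) * s = k) :
    p = 0 ∧ q = 0 := by
  by_contra hpq
  exact h p q (by simpa [Prod.ext_iff] using hpq) k hk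

/-- Writing `Δᵢ = gᵢ (r, s) - Lᵢ`, a relation `a Δ₁ + b Δ₂ = 0` puts `(r, s)` on the line through
the rational points `Lᵢ / gᵢ`, whose equation has integer coefficients. -/
lemma zero_notMem_segment (h : NonResonant r s) {g₁ g₂ : ℕ} (hg₁ : 1 ≤ g₁) (hg₂ : 1 ≤ g₂)
    {Δ₁ Δ₂ : ℝ × ℝ} (h₁ : g₁ • (r, s) - Δ₁ ∈ intLattice) (h₂ : g₂ • (r, s) - Δ₂ ∈ intLattice) :
    (0 : ℝ × ℝ) ∉ segment ℝ Δ₁ Δ₂ := by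
  rintro ⟨a, b, ha, hb, hab, h0⟩
  obtain ⟨p₁, q₁, hL₁⟩ := exists_eq_of_mem_intLattice h₁
  obtain ⟨p₂, q₂, hL₂⟩ := exists_eq_of_mem_intLattice h₂
  rw [sub_eq_iff_eq_add'] at hL₁ hL₂
  rw [Prod.ext_iff] at h0 hL₁ hL₂
  simp only [Prod.fst_add, Prod.snd_add, Prod.smul_fst, Prod.smul_snd, smul_eq_mul,
    Prod.fst_zero, Prod.snd_zero] at h0 hL₁ hL₂
  simp only [nsmul_eq_mul] at hL₁ hL₂
  have hpos : 0 < a * g₁ + b * g₂ := by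
    have : (1 : ℝ) ≤ g₁ := by exact_mod_cast hg₁
    have : (1 : ℝ) ≤ g₂ := by exact_mod_cast hg₂
    nlinarith
  have hx : (a * g₁ + b * g₂) * r = a * p₁ + b * p₂ := by
    linear_combination a * hL₁.1 + b * hL₂.1 + h0.1
  have hy : (a * g₁ + b * g₂) * s = a * q₁ + b * q₂ := by
    linear_combination a * hL₁.2 + b * hL₂.2 + h0.2
  have hline : ((g₂ * q₁ - g₁ * q₂ : ℤ) : ℝ) * r + ((g₁ * p₂ - g₂ * p₁ : ℤ) : ℝ) * s
      = ((q₁ * p₂ - p₁ * q₂ : ℤ) : ℝ) := by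
    refine mul_left_cancel₀ hpos.ne' ?_
    push_cast
    linear_combination (g₂ * q₁ - g₁ * q₂ : ℝ) * hx + (g₁ * p₂ - g₂ * p₁ : ℝ) * hy
  obtain ⟨hq, hp⟩ := h.eq_zero hline
  have hq' : (g₂ * q₁ : ℝ) = g₁ * q₂ := by exact_mod_cast sub_eq_zero.1 hq
  have hp' : (g₁ * p₂ : ℝ) = g₂ * p₁ := by exact_mod_cast sub_eq_zero.1 hp
  have hrat : ((g₁ : ℤ) : ℝ) * r + ((0 : ℤ) : ℝ) * s = ((p₁ : ℤ) : ℝ) := by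
    refine mul_left_cancel₀ hpos.ne' ?_
    push_cast
    linear_combination (g₁ : ℝ) * hx + b * hp'
  have := (h.eq_zero hrat).1
  omega

end NonResonant

lemma AddSubgroup.card_nsmul_sub_sum_mem {M ι : Type*} [AddCommGroup M] (H : AddSubgroup M)
    {t : M} {s : Finset ι} {δ : ι → M} (hδ : ∀ i ∈ s, t - δ i ∈ H) :
    s.card • t - ∑ i ∈ s, δ i ∈ H := by
  rw [← Finset.sum_const, ← Finset.sum_sub_distrib]
  exact H.sum_mem hδ

section Growth

variable {V : Type*} [NormedAddCommGroup V]

lemma exists_pos_mul_le_norm_sum_of_convex [NormedSpace ℝ V] {K : Set V} (hK : Convex ℝ K)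
    (hKc : IsClosed K) (h0 : (0 : V) ∉ K) :
    ∃ c > 0, ∀ (n : ℕ) (X : ℕ → V), (∀ i < n, X i ∈ K) →
      c * n ≤ ‖∑ i ∈ Finset.range n, X i‖ := by
  obtain ⟨c, hc, hball⟩ := Metric.isOpen_iff.1 hKc.isOpen_compl 0 h0
  refine ⟨c, hc, fun n X hX => ?_⟩
  rcases Nat.eq_zero_or_pos n with rfl | hn
  · simp
  have hn' : (0 : ℝ) < n := by exact_mod_cast hn
  have hmean : ∑ i ∈ Finset.range n, (n : ℝ)⁻¹ • X i ∈ K :=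
    hK.sum_mem (fun _ _ => by positivity) (by simp [hn'.ne'])
      (fun i hi => hX i (Finset.mem_range.1 hi))
  have hfar : c ≤ ‖∑ i ∈ Finset.range n, (n : ℝ)⁻¹ • X i‖ := by
    by_contra! hlt
    exact hball (mem_ball_zero_iff.2 hlt) hmean
  rw [← Finset.smul_sum, norm_smul, Real.norm_of_nonneg (by positivity)] at hfar
  rwa [le_inv_mul_iff₀ hn', mul_comm] at hfar

lemma tendsto_norm_atTop_of_comp_strictMono {S : ℕ → V} {d : ℝ}
    (hS : ∀ N, dist (S N) (S (N + 1)) ≤ d) {o : ℕ → ℕ} (ho : StrictMono o) {G : ℕ}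
    (hG : ∀ i, o (i + 1) ≤ o i + G) (hSo : Tendsto (fun i => ‖S (o i)‖) atTop atTop) :
    Tendsto (fun N => ‖S N‖) atTop atTop := by
  rw [tendsto_atTop_atTop] at hSo ⊢
  intro B
  obtain ⟨I, hI⟩ := hSo (B + G * d)
  refine ⟨o I, fun N hN => ?_⟩
  obtain ⟨i, hiN, hNi⟩ := ho.exists_between_of_tendsto_atTop ho.tendsto_atTop
    (x := N + 1) (by have := ho.monotone (Nat.zero_le I); omega)
  have hIi : I ≤ i := by
    by_contra! h
    have := ho.monotone (show i + 1 ≤ I by omega)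
    omega
  have hdist : dist (S (o i)) (S N) ≤ G * d := by
    calc dist (S (o i)) (S N) ≤ ∑ _j ∈ Finset.Ico (o i) N, d :=
          dist_le_Ico_sum_of_dist_le (by omega) fun _ _ => hS _
      _ = (N - o i : ℕ) * d := by simp
      _ ≤ G * d := by
          gcongr
          · exact dist_nonneg.trans (hS 0)
          · have := hG i; omega
  have := hI i hIi
  have := norm_sub_norm_le (S (o i)) (S N)
  rw [← dist_eq_norm] at this
  linarith

lemma tendsto_norm_sum_of_blocks [NormedSpace ℝ V] {y : ℕ → V} {d : ℝ} (hy : ∀ j, ‖y j‖ ≤ d)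
    {o : ℕ → ℕ} (ho : StrictMono o) {G : ℕ} (hG : ∀ i, o (i + 1) ≤ o i + G)
    {K : Set V} (hK : Convex ℝ K) (hKc : IsClosed K) (h0 : (0 : V) ∉ K)
    (hblock : ∀ i, ∑ j ∈ Finset.Ico (o i) (o (i + 1)), y j ∈ K) :
    Tendsto (fun N => ‖∑ j ∈ Finset.range N, y j‖) atTop atTop := by
  set S : ℕ → V := fun N => ∑ j ∈ Finset.range N, y j
  obtain ⟨c, hc, hgrowth⟩ := exists_pos_mul_le_norm_sum_of_convex hK hKc h0
  have hblock' : ∀ i, S (o (i + 1)) - S (o i) ∈ K := fun i => by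
    simpa only [S, Finset.sum_Ico_eq_sub _ (ho.monotone (Nat.le_succ i))] using hblock i
  have hlin : ∀ i, c * i - ‖S (o 0)‖ ≤ ‖S (o i)‖ := fun i => by
    have := hgrowth i _ fun i _ => hblock' i
    rw [Finset.sum_range_sub (fun i => S (o i))] at this
    have := norm_sub_le (S (o i)) (S (o 0))
    linarith
  refine tendsto_norm_atTop_of_comp_strictMono (d := d) (fun N => ?_) ho hG ?_
  · simp [dist_eq_norm, Finset.sum_range_succ, hy N]
  · refine tendsto_atTop_mono hlin ?_
    exact tendsto_atTop_add_const_right _ _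
      (tendsto_natCast_atTop_atTop.const_mul_atTop hc)

end Growth

lemma Nat.nth_succ_le_of_nth_lt {p : ℕ → Prop} {i x : ℕ} (hx : p x) (hlt : Nat.nth p i < x) :
    Nat.nth p (i + 1) ≤ x := by
  by_contra! h
  exact absurd (Nat.le_nth_of_lt_nth_succ h hx) (by omega)

section Words

variable {α : Type*}

def window (u : ℕ → α) (k j : ℕ) : Fin k → α := fun i => u (j + i)

structure OneSpecialFactor (u : ℕ → α) (k : ℕ) (ws : Fin k → α) : Prop where
  det : ∀ j j', window u k j = window u k j' → window u k j ≠ ws → u (j + k) = u (j' + k)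
  branch : ∀ j₁ j₂ j₃, window u k j₁ = ws → window u k j₂ = ws → window u k j₃ = ws →
    u (j₁ + k) = u (j₂ + k) ∨ u (j₁ + k) = u (j₃ + k) ∨ u (j₂ + k) = u (j₃ + k)

def SameBlock (u : ℕ → α) (o : ℕ → ℕ) (i i' : ℕ) : Prop :=
  o (i + 1) - o i = o (i' + 1) - o i' ∧ ∀ e < o (i + 1) - o i, u (o i + e) = u (o i' + e)

lemma SameBlock.sum_eq {M : Type*} [AddCommMonoid M] {u : ℕ → α} {o : ℕ → ℕ} {i i' : ℕ}
    (h : SameBlock u o i i') (f : α → M) :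
    ∑ j ∈ Finset.Ico (o i) (o (i + 1)), f (u j) =
      ∑ j ∈ Finset.Ico (o i') (o (i' + 1)), f (u j) := by
  rw [Finset.sum_Ico_eq_sum_range, Finset.sum_Ico_eq_sum_range, ← h.1]
  exact Finset.sum_congr rfl fun e he => by rw [h.2 e (Finset.mem_range.1 he)]

namespace OneSpecialFactor

variable {u : ℕ → α} {k : ℕ} {ws : Fin k → α}

lemma agree (h : OneSpecialFactor u k ws) {j j' : ℕ} (hw : window u k j = window u k j')
    {n : ℕ} (hn : ∀ e < n, window u k (j + e) = ws → u (j + e + k) = u (j' + e + k)) :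
    ∀ e < n + k, u (j + e) = u (j' + e) := by
  induction n with
  | zero => exact fun e he => congrFun hw ⟨e, by omega⟩
  | succ n ih =>
    have hagree := ih fun e he => hn e (by omega)
    have hwn : window u k (j + n) = window u k (j' + n) := funext fun i => by
      simpa only [window, add_assoc] using hagree (n + i) (by omega)
    have hnext : u (j + n + k) = u (j' + n + k) := by
      by_cases hs : window u k (j + n) = ws
      · exact hn n (by omega) hs
      · exact h.det _ _ hwn hs
    intro e he
    rcases Nat.lt_or_ge e (n + k) with he' | he'
    · exact hagree e he'
    · obtain rfl : e = n + k := by omega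
      simpa only [add_assoc] using hnext

lemma exists_eventually_periodic [Finite α] (h : OneSpecialFactor u k ws)
    (hfin : {j | window u k j = ws}.Finite) :
    ∃ j q, 0 < q ∧ ∀ e, u (j + q + e) = u (j + e) := by
  obtain ⟨J, hJ⟩ := hfin.bddAbove
  have hnot : ∀ j, J < j → window u k j ≠ ws := fun j hj hs => by
    have := hJ hs
    omega
  obtain ⟨x, y, hxy, hwin⟩ :=
    Finite.exists_ne_map_eq_of_infinite fun n => window u k (J + 1 + n)
  wlog hlt : x < y generalizing x y
  · exact this y x hxy.symm hwin.symm (by omega)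
  refine ⟨J + 1 + x, y - x, by omega, fun e => ?_⟩
  have := h.agree hwin (n := e + 1) (fun e' _ hs => absurd hs (hnot _ (by omega))) e (by omega)
  rw [this]
  congr 1
  omega

lemma sameBlock_of_periodic {j q : ℕ} (hper : ∀ e, u (j + q + e) = u (j + e)) (i : ℕ) :
    SameBlock u (fun i => j + q * i) i 0 := by
  have hshift : ∀ i e, u (j + q * i + e) = u (j + e) := by
    intro i
    induction i with
    | zero => simp
    | succ i ih =>
      intro e
      rw [show j + q * (i + 1) + e = j + q + (q * i + e) by ring, hper, ← add_assoc, ih]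
  refine ⟨by simp only [Nat.mul_succ]; omega, fun e _ => ?_⟩
  simpa using hshift i e

lemma sameBlock_nth (h : OneSpecialFactor u k ws) (hinf : {j | window u k j = ws}.Infinite)
    {i i' : ℕ} (hlabel : u (Nat.nth (window u k · = ws) i + k) =
      u (Nat.nth (window u k · = ws) i' + k)) :
    SameBlock u (Nat.nth (window u k · = ws)) i i' := by
  set o := Nat.nth (window u k · = ws)
  have hmono : StrictMono o := Nat.nth_strictMono hinf
  have hmem : ∀ i, window u k (o i) = ws := Nat.nth_mem_of_infinite hinf
  have hgap : ∀ a, o a < o (a + 1) := fun a => hmono (Nat.lt_succ_self a)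
  set n := min (o (i + 1) - o i) (o (i' + 1) - o i')
  have hagree := h.agree ((hmem i).trans (hmem i').symm) (n := n) fun e he hs => by
    rcases Nat.eq_zero_or_pos e with rfl | he0
    · simpa using hlabel
    · have : o (i + 1) ≤ o i + e := Nat.nth_succ_le_of_nth_lt hs (show o i < o i + e by omega)
      omega
  have hwin : window u k (o i + n) = window u k (o i' + n) := funext fun t => by
    simpa only [window, add_assoc] using hagree (n + t) (by omega)
  have hgap_le : ∀ {a}, window u k (o a + n) = ws → o (a + 1) - o a ≤ n := fun {a} hs => by
    have : o (a + 1) ≤ o a + n := Nat.nth_succ_le_of_nth_lt hs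
      (show o a < o a + n by have := hgap i; have := hgap i'; omega)
    omega
  have heq : o (i + 1) - o i = o (i' + 1) - o i' := by
    have := hgap i
    have := hgap i'
    rcases min_choice (o (i + 1) - o i) (o (i' + 1) - o i') with hn | hn
    · have := hgap_le (a := i') (hwin ▸ (show o i + n = o (i + 1) by omega) ▸ hmem (i + 1))
      omega
    · have := hgap_le (a := i) (hwin ▸ (show o i' + n = o (i' + 1) by omega) ▸ hmem (i' + 1))
      omega
  exact ⟨heq, fun e he => hagree e (by omega)⟩

lemma exists_twoBlocks [Finite α] (h : OneSpecialFactor u k ws) :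
    ∃ o : ℕ → ℕ, StrictMono o ∧ ∃ i₁ i₂, ∀ i, SameBlock u o i i₁ ∨ SameBlock u o i i₂ := by
  by_cases hinf : {j | window u k j = ws}.Infinite
  · set o := Nat.nth (window u k · = ws)
    have hmem : ∀ i, window u k (o i) = ws := Nat.nth_mem_of_infinite hinf
    refine ⟨o, Nat.nth_strictMono hinf, ?_⟩
    by_cases hex : ∃ i₂, u (o i₂ + k) ≠ u (o 0 + k)
    · obtain ⟨i₂, hi₂⟩ := hex
      refine ⟨0, i₂, fun i => ?_⟩
      rcases h.branch _ _ _ (hmem i) (hmem 0) (hmem i₂) with h0 | h2 | h02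
      · exact Or.inl (h.sameBlock_nth hinf h0)
      · exact Or.inr (h.sameBlock_nth hinf h2)
      · exact absurd h02.symm hi₂
    · simp only [not_exists, not_not] at hex
      exact ⟨0, 0, fun i => Or.inl (h.sameBlock_nth hinf (hex i))⟩
  · obtain ⟨j, q, hq, hper⟩ := h.exists_eventually_periodic (Set.not_infinite.1 hinf)
    refine ⟨fun i => j + q * i, fun a b hab => by simp [hq, hab], 0, 0,
      fun i => Or.inl (sameBlock_of_periodic hper i)⟩

end OneSpecialFactor

lemma Finset.exists_le_one_of_sum_le_card_add_one {κ : Type*} [Nonempty κ] {t : Finset κ}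
    {F : κ → ℕ} (hpos : ∀ b ∈ t, 1 ≤ F b) (hzero : ∀ b ∉ t, F b = 0)
    (hsum : ∑ b ∈ t, F b ≤ t.card + 1) : ∃ b₀, (∀ b ≠ b₀, F b ≤ 1) ∧ F b₀ ≤ 2 := by
  have hexcess : ∑ b ∈ t, (F b - 1) ≤ 1 := by
    have : ∑ b ∈ t, F b = ∑ b ∈ t, ((F b - 1) + 1) :=
      Finset.sum_congr rfl fun b hb => by have := hpos b hb; omega
    rw [this, Finset.sum_add_distrib, ← Finset.card_eq_sum_ones] at hsum
    omega
  have hmem : ∀ b, 2 ≤ F b → b ∈ t := fun b hb => by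
    by_contra hbt
    have := hzero b hbt
    omega
  have hle : ∀ b, F b ≤ 2 := fun b => by
    by_contra! hb
    have := Finset.single_le_sum (f := fun b => F b - 1) (fun _ _ => Nat.zero_le _)
      (hmem b (by omega))
    omega
  have huniq : ∀ b b', 2 ≤ F b → 2 ≤ F b' → b = b' := fun b b' hb hb' => by
    classical
    by_contra hne
    have := Finset.sum_le_sum_of_subset (f := fun b => F b - 1)
      (Finset.insert_subset (hmem b hb) (Finset.singleton_subset_iff.2 (hmem b' hb')))
    rw [Finset.sum_pair hne] at this
    omega
  by_cases hspecial : ∃ b₀, 2 ≤ F b₀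
  · obtain ⟨b₀, hb₀⟩ := hspecial
    exact ⟨b₀, fun b hne => by by_contra! hb; exact hne (huniq b b₀ (by omega) hb₀), hle b₀⟩
  · push Not at hspecial
    exact ⟨Classical.arbitrary κ, fun b _ => by have := hspecial b; omega, hle _⟩

lemma exists_oneSpecialFactor {α : Type*} [DecidableEq α] [Nonempty α] {k : ℕ}
    {L : Finset (Fin k → α)} {L' : Finset (Fin (k + 1) → α)}
    (hinit : ∀ v ∈ L', Fin.init v ∈ L) (hext : ∀ w ∈ L, ∃ v ∈ L', Fin.init v = w)
    (hcard : L'.card ≤ L.card + 1) :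
    ∃ ws, ∀ u : ℕ → α, (∀ j, window u (k + 1) j ∈ L') → OneSpecialFactor u k ws := by
  obtain ⟨ws, hdet, hbranch⟩ := Finset.exists_le_one_of_sum_le_card_add_one
    (F := fun w => (L'.filter (Fin.init · = w)).card)
    (fun w hw => by
      obtain ⟨v, hv, rfl⟩ := hext w hw
      exact Finset.card_pos.2 ⟨v, Finset.mem_filter.2 ⟨hv, rfl⟩⟩)
    (fun w hw => Finset.card_eq_zero.2 <| Finset.filter_eq_empty_iff.2 fun v hv hvw =>
      hw (hvw ▸ hinit v hv))
    ((Finset.card_eq_sum_card_fiberwise hinit).symm.trans_le hcard)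
  refine ⟨ws, fun u hu => ⟨fun j j' hjj' hne => ?_, fun j₁ j₂ j₃ h₁ h₂ h₃ => ?_⟩⟩
  · have hmem : ∀ i, window u k i = window u k j →
        window u (k + 1) i ∈ L'.filter (Fin.init · = window u k j) := fun i hi =>
      Finset.mem_filter.2 ⟨hu i, hi⟩
    have := Finset.card_le_one.1 (hdet _ hne) _ (hmem j rfl) _ (hmem j' hjj'.symm)
    exact congrFun this (Fin.last k)
  · have hmem : ∀ i, window u k i = ws → window u (k + 1) i ∈ L'.filter (Fin.init · = ws) :=
      fun i hi => Finset.mem_filter.2 ⟨hu i, hi⟩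
    by_contra! hdistinct
    refine absurd (Finset.two_lt_card_iff.2
      ⟨_, _, _, hmem j₁ h₁, hmem j₂ h₂, hmem j₃ h₃, ?_, ?_, ?_⟩) (not_lt.2 hbranch)
    · exact fun h => hdistinct.1 (congrFun h (Fin.last k))
    · exact fun h => hdistinct.2.1 (congrFun h (Fin.last k))
    · exact fun h => hdistinct.2.2 (congrFun h (Fin.last k))

end Words

lemma tendsto_norm_sum_of_oneSpecialFactor {α : Type*} [Finite α] {r s : ℝ}
    (hres : NonResonant r s) {δ : α → ℝ × ℝ} (hδ : ∀ a, (r, s) - δ a ∈ intLattice)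
    {u : ℕ → α} {k : ℕ} {ws : Fin k → α} (h : OneSpecialFactor u k ws) :
    Tendsto (fun N => ‖∑ j ∈ Finset.range N, δ (u j)‖) atTop atTop := by
  obtain ⟨o, ho, i₁, i₂, hblocks⟩ := h.exists_twoBlocks
  set B : ℕ → ℝ × ℝ := fun i => ∑ j ∈ Finset.Ico (o i) (o (i + 1)), δ (u j)
  have hgap : ∀ i, 1 ≤ o (i + 1) - o i := fun i => by
    have := ho (show i < i + 1 by omega)
    omega
  have hlat : ∀ i, (o (i + 1) - o i) • (r, s) - B i ∈ intLattice := fun i => by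
    simpa using intLattice.card_nsmul_sub_sum_mem fun j (_ : j ∈ Finset.Ico (o i) (o (i + 1))) =>
      hδ (u j)
  obtain ⟨d, hd⟩ := (Set.finite_range fun a => ‖δ a‖).bddAbove
  refine tendsto_norm_sum_of_blocks (d := d) (fun j => hd ⟨u j, rfl⟩) ho
    (G := max (o (i₁ + 1) - o i₁) (o (i₂ + 1) - o i₂)) (fun i => ?_) (convex_segment (B i₁) (B i₂))
    (by rw [← convexHull_pair (𝕜 := ℝ)]; exact (Set.toFinite _).isClosed_convexHull ℝ)
    (hres.zero_notMem_segment (hgap i₁) (hgap i₂) (hlat i₁) (hlat i₂)) (fun i => ?_)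
  · rcases hblocks i with hb | hb <;> have := hb.1 <;> omega
  · rcases hblocks i with hb | hb
    · exact (hb.sum_eq δ).symm ▸ left_mem_segment ℝ (B i₁) (B i₂)
    · exact (hb.sum_eq δ).symm ▸ right_mem_segment ℝ (B i₁) (B i₂)

lemma exists_measure_closedBall_compl_lt {X : Type*} [NormedAddCommGroup X] [MeasurableSpace X]
    [OpensMeasurableSpace X] (ν : Measure X) [IsFiniteMeasure ν] {ε : ENNReal} (hε : 0 < ε) :
    ∃ M : ℕ, ν (Metric.closedBall 0 M)ᶜ < ε := by
  have := tendsto_measure_iInter_atTop (μ := ν) (s := fun M : ℕ => (Metric.closedBall (0 : X) M)ᶜ)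
    (fun M => measurableSet_closedBall.compl.nullMeasurableSet)
    (fun a b hab => Set.compl_subset_compl.2 (Metric.closedBall_subset_closedBall
      (Nat.cast_le.2 hab))) ⟨0, measure_ne_top _ _⟩
  simp only [Function.comp_def, ← Set.compl_iUnion, Metric.iUnion_closedBall_nat, Set.compl_univ,
    measure_empty] at this
  exact ((tendsto_order.1 this).2 ε hε).exists

lemma not_ae_tendsto_norm_sub_of_measurePreserving {X : Type*} [NormedAddCommGroup X]
    [MeasurableSpace X] [OpensMeasurableSpace X] {ν : Measure X} [IsProbabilityMeasure ν]
    {f : ℕ → X → X} (hf : ∀ N, MeasurePreserving (f N) ν ν) :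
    ¬ ∀ᵐ x ∂ν, Tendsto (fun N => ‖f N x - x‖) atTop atTop := by
  intro hae
  set ε : ENNReal := 2⁻¹ / 2
  obtain ⟨M, hM⟩ := exists_measure_closedBall_compl_lt ν (show 0 < ε by simp [ε])
  set A : ℕ → Set X := fun K => {x | ∀ N, K ≤ N → 2 * M < ‖f N x - x‖}
  have hA : Monotone A := fun K K' hK x hx N hN => hx N (hK.trans hN)
  have hAfull : ν (⋃ K, A K) = 1 := by
    refine le_antisymm prob_le_one (measure_univ (μ := ν) ▸ measure_mono_ae ?_)
    filter_upwards [hae] with x hx _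
    exact Set.mem_iUnion.2 ((tendsto_atTop.1 hx (2 * M + 1)).exists_forall_of_atTop.imp
      fun K hK N hN => by have := hK N hN; linarith)
  obtain ⟨K, hK⟩ := ((tendsto_order.1 (hAfull ▸ tendsto_measure_iUnion_atTop hA)).1 2⁻¹
    (by norm_num)).exists
  have hsub : A K ⊆ (Metric.closedBall 0 M)ᶜ ∪ f K ⁻¹' (Metric.closedBall 0 M)ᶜ := by
    intro x hx
    by_contra! hin
    simp only [Set.mem_union, Set.mem_compl_iff, Set.mem_preimage, not_or, not_not,
      mem_closedBall_zero_iff] at hin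
    have := hx K le_rfl
    have := norm_sub_le (f K x) x
    linarith
  have : ν (A K) < 2⁻¹ := calc
    ν (A K) ≤ ν (Metric.closedBall 0 M)ᶜ + ν (f K ⁻¹' (Metric.closedBall 0 M)ᶜ) :=
      (measure_mono hsub).trans (measure_union_le _ _)
    _ = ν (Metric.closedBall 0 M)ᶜ + ν (Metric.closedBall 0 M)ᶜ := by
      rw [(hf K).measure_preimage measurableSet_closedBall.compl.nullMeasurableSet]
    _ < ε + ε := ENNReal.add_lt_add hM hM
    _ = 2⁻¹ := ENNReal.add_halves _
  exact absurd hK (not_lt.2 this.le)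

namespace PieceExchange

variable {m : ℕ}

section General

variable {T : ℝ × ℝ → ℝ × ℝ} (E : PieceExchange T m)

lemma measurableSet_domain : MeasurableSet E.domain := MeasurableSet.iUnion E.measD

def vol : Measure (ℝ × ℝ) := volume.restrict E.domain

instance : IsProbabilityMeasure E.vol :=
  ⟨by rw [vol, Measure.restrict_apply_univ]; exact E.measure_union⟩

lemma measurePreserving_R : MeasurePreserving E.R E.vol E.vol where
  measurable := E.measR
  map_eq := by
    ext A hA
    rw [Measure.map_apply E.measR hA, vol, Measure.restrict_apply (E.measR hA),
      Measure.restrict_apply hA, Set.inter_comm, Set.inter_comm A]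
    exact E.meas_pres A hA

def cell {n : ℕ} (w : Fin n → Fin m) : Set (ℝ × ℝ) := ⋂ i : Fin n, E.R^[i] ⁻¹' E.D (w i)

open Classical in
def posWords (n : ℕ) : Finset (Fin n → Fin m) := Finset.univ.filter fun w => E.vol (E.cell w) ≠ 0

lemma mem_posWords {n : ℕ} {w : Fin n → Fin m} : w ∈ E.posWords n ↔ E.vol (E.cell w) ≠ 0 := by
  simp [posWords]

def overlap : Set (ℝ × ℝ) := ⋃ (i) (j) (_ : i ≠ j), E.D i ∩ E.D j

lemma vol_overlap : E.vol E.overlap = 0 :=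
  nonpos_iff_eq_zero.1 <| (Measure.restrict_apply_le _ _).trans_eq <|
    measure_iUnion_null fun i => measure_iUnion_null fun j => measure_iUnion_null (E.aeDisjoint i j)

def good : Set (ℝ × ℝ) :=
  {x | x ∈ E.domain ∧ (∀ n, E.R^[n] x ∉ E.overlap) ∧
    ∀ j n (w : Fin n → Fin m), E.R^[j] x ∈ E.cell w → w ∈ E.posWords n}

lemma ae_mem_good : ∀ᵐ x ∂E.vol, x ∈ E.good := by
  have hpull : ∀ j {p : ℝ × ℝ → Prop}, (∀ᵐ y ∂E.vol, p y) → ∀ᵐ x ∂E.vol, p (E.R^[j] x) :=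
    fun j _ h => (E.measurePreserving_R.iterate j).quasiMeasurePreserving.ae h
  have hcell : ∀ j n (w : Fin n → Fin m), ∀ᵐ x ∂E.vol, E.R^[j] x ∈ E.cell w → w ∈ E.posWords n := by
    intro j n w
    by_cases hw : w ∈ E.posWords n
    · exact Eventually.of_forall fun _ _ => hw
    · have hnull : E.vol (E.cell w) = 0 := not_not.1 (E.mem_posWords.not.1 hw)
      filter_upwards [hpull j (measure_eq_zero_iff_ae_notMem.1 hnull)] with x hx hmem
      exact absurd hmem hx
  filter_upwards [ae_restrict_mem E.measurableSet_domain,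
    ae_all_iff.2 fun n => hpull n (measure_eq_zero_iff_ae_notMem.1 E.vol_overlap),
    ae_all_iff.2 fun j => ae_all_iff.2 fun n => ae_all_iff.2 (hcell j n)] with x h₁ h₂ h₃
  exact ⟨h₁, h₂, h₃⟩

variable {E}

lemma code_eq_of_mem_good {x : ℝ × ℝ} (hx : x ∈ E.good) {n : ℕ} {i : Fin m}
    (hi : E.R^[n] x ∈ E.D i) : E.C x n = i := by
  by_contra hne
  exact hx.2.1 n <| Set.mem_iUnion.2 ⟨_, Set.mem_iUnion.2 ⟨i, Set.mem_iUnion.2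
    ⟨hne, E.mem_code x hx.1 n, hi⟩⟩⟩

lemma mem_cell_window {x : ℝ × ℝ} (hx : x ∈ E.domain) (j n : ℕ) :
    E.R^[j] x ∈ E.cell (window (E.C x) n j) :=
  Set.mem_iInter.2 fun i => by
    rw [Set.mem_preimage, ← Function.iterate_add_apply, add_comm]
    exact E.mem_code x hx (j + i)

lemma window_mem_posWords {x : ℝ × ℝ} (hx : x ∈ E.good) (n j : ℕ) :
    window (E.C x) n j ∈ E.posWords n :=
  hx.2.2 j n _ (mem_cell_window hx.1 j n)

lemma exists_good_window_eq {n : ℕ} {w : Fin n → Fin m} (hw : w ∈ E.posWords n) :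
    ∃ x ∈ E.good, window (E.C x) n 0 = w := by
  obtain ⟨x, hxw, hx⟩ :=
    Measure.exists_mem_of_measure_ne_zero_of_ae (E.mem_posWords.1 hw)
      (ae_restrict_of_ae E.ae_mem_good)
  refine ⟨x, hx, funext fun i => code_eq_of_mem_good hx ?_⟩
  simpa using Set.mem_iInter.1 hxw i

variable (E)

lemma card_posWords_zero : (E.posWords 0).card = 1 := by
  refine Finset.card_eq_one.2 ⟨Fin.elim0, Finset.eq_singleton_iff_unique_mem.2
    ⟨E.mem_posWords.2 ?_, fun _ _ => Subsingleton.elim _ _⟩⟩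
  simp [cell]

lemma init_mem_posWords {n : ℕ} {v : Fin (n + 1) → Fin m} (hv : v ∈ E.posWords (n + 1)) :
    Fin.init v ∈ E.posWords n := by
  refine E.mem_posWords.2 fun h0 => E.mem_posWords.1 hv (measure_mono_null ?_ h0)
  exact Set.iInter_mono' fun i => ⟨Fin.castSucc i, subset_rfl⟩

lemma exists_init_eq {n : ℕ} {w : Fin n → Fin m} (hw : w ∈ E.posWords n) :
    ∃ v ∈ E.posWords (n + 1), Fin.init v = w := by
  obtain ⟨x, hx, rfl⟩ := exists_good_window_eq hw
  exact ⟨_, window_mem_posWords hx (n + 1) 0, rfl⟩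

lemma card_posWords_le_complexity (n : ℕ) :
    (E.posWords n).card ≤ E.complexity n := by
  have : Finite {w : List (Fin m) // w ∈ E.lang ∧ w.length = n} :=
    ((List.finite_length_eq (Fin m) n).subset fun _ hw => hw.2).to_subtype
  have hlang : ∀ w ∈ E.posWords n, List.ofFn w ∈ E.lang := fun w hw => by
    obtain ⟨x, hx, rfl⟩ := exists_good_window_eq hw
    refine ⟨n, 0, x, hx.1, List.ext_getElem (by simp) fun i _ _ => ?_⟩
    simp [window]
  rw [← Nat.card_eq_finsetCard]
  exact Nat.card_le_card_of_injective
    (fun w => ⟨List.ofFn w.1, hlang w.1 w.2, List.length_ofFn⟩)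
    fun w w' h => Subtype.ext (List.ofFn_injective (congrArg Subtype.val h))

end General

lemma iterate_eq_add_sum {r s : ℝ} (E : PieceExchange (fun x : ℝ × ℝ => (x.1 + r, x.2 + s)) m)
    {x : ℝ × ℝ} (hx : x ∈ E.domain) (N : ℕ) :
    E.R^[N] x = x + ∑ j ∈ Finset.range N, ((r, s) - latVec (E.vec (E.C x j))) := by
  induction N with
  | zero => simp
  | succ N ih =>
    rw [Function.iterate_succ_apply', E.R_eq x hx N, ih, Finset.sum_range_succ]
    ext <;> simp <;> ring

lemma card_posWords_add_two_le {r s : ℝ} (hres : NonResonant r s)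
    (E : PieceExchange (fun x : ℝ × ℝ => (x.1 + r, x.2 + s)) m) (k : ℕ) :
    (E.posWords k).card + 2 ≤ (E.posWords (k + 1)).card := by
  by_contra! hcard
  refine not_ae_tendsto_norm_sub_of_measurePreserving (ν := E.vol)
    (fun N => E.measurePreserving_R.iterate N) ?_
  filter_upwards [E.ae_mem_good] with x hx
  have : Nonempty (Fin m) := ⟨E.C x 0⟩
  obtain ⟨ws, hws⟩ := exists_oneSpecialFactor (k := k) (fun _ => E.init_mem_posWords)
    (fun _ => E.exists_init_eq) (by omega)
  have := tendsto_norm_sum_of_oneSpecialFactor hres (δ := fun i => (r, s) - latVec (E.vec i))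
    (fun i => by simpa using latVec_mem_intLattice (E.vec i))
    (hws _ fun j => window_mem_posWords hx (k + 1) j)
  simpa [E.iterate_eq_add_sum hx.1] using this

lemma two_mul_add_one_le_card_posWords {r s : ℝ} (hres : NonResonant r s)
    (E : PieceExchange (fun x : ℝ × ℝ => (x.1 + r, x.2 + s)) m) (n : ℕ) :
    2 * n + 1 ≤ (E.posWords n).card := by
  induction n with
  | zero => simp [E.card_posWords_zero]
  | succ n ih =>
    have := card_posWords_add_two_le hres E n
    omega

end PieceExchange

/-- If `r, s` are reals with `n r + m s ∉ ℤ` for every pair of integers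
`(n, m) ≠ (0, 0)` (so that the translation `T (x,y) = (x+r, y+s)` induces an ergodic rotation
of the torus `ℝ²/ℤ²`), then every exchange of pieces conjugate to `T` has complexity at least
`2n + 1` for every `n ≥ 1`; in particular the complexity function associated to `T` (the
infimum over all conjugate exchanges of pieces) is at least `2n + 1` for every `n ≥ 1`. -/
theorem complexity_lower_bound_translation (r s : ℝ)
    (hirr : ∀ p q : ℤ, (p, q) ≠ (0, 0) → ∀ k : ℤ, (p : ℝ) * r + (q : ℝ) * s ≠ (k : ℝ)) :
    (∀ (m : ℕ) (E : PieceExchange (fun x : ℝ × ℝ => (x.1 + r, x.2 + s)) m),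
      E.Conjugate → ∀ n : ℕ, 1 ≤ n → 2 * n + 1 ≤ E.complexity n) ∧
    (∀ n : ℕ, 1 ≤ n →
      (2 * n + 1 : ℕ∞) ≤ complexityFn (fun x : ℝ × ℝ => (x.1 + r, x.2 + s)) n) := by
  have hbound : ∀ (m : ℕ) (E : PieceExchange (fun x : ℝ × ℝ => (x.1 + r, x.2 + s)) m) (n : ℕ),
      2 * n + 1 ≤ E.complexity n := fun m E n =>
    (E.two_mul_add_one_le_card_posWords hirr n).trans (E.card_posWords_le_complexity n)
  refine ⟨fun m E _ n _ => hbound m E n, fun n _ => ?_⟩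
  exact le_iInf fun m => le_iInf fun E => le_iInf fun _ => by exact_mod_cast hbound m E n

end
end

section
/- Let T be a measurable, μ-almost surely ℤ²-periodic, Lebesgue-measure-preserving map of the plane whose induced system T̄ on the torus ℝ²/ℤ² is totally ergodic (all powers T̄^k, k ≥ 1, are ergodic for Lebesgue measure on the torus), and suppose there exists an exchange of pieces conjugate to T. Then for every exchange of pieces R conjugate to T the complexity function p_R is strictly increasing; consequently the complexity function associated to T is well defined, strictly increasing, and satisfies p^T(n) ≥ n+1 for every integer n ≥ 1. -/
open MeasureTheory Filter Topology

noncomputable section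

/-- The torus `ℝ²/ℤ²`. -/
abbrev Torus := AddCircle (1 : ℝ) × AddCircle (1 : ℝ)

/-- The canonical projection `ℝ² → ℝ²/ℤ²`. -/
def torusProj : ℝ × ℝ → Torus := fun x => ((x.1 : AddCircle (1 : ℝ)), (x.2 : AddCircle (1 : ℝ)))

/-! If a set of sequences over a finite alphabet has as many factors of length `n + 1` as of
length `n`, every factor of length `n` has a unique right extension, so each sequence is
determined by its first `n` terms and there are only finitely many sequences. The codings of a
conjugate exchange are injective off a null subset of a domain of measure one, so there are
infinitely many of them; hence the complexity is strictly increasing, and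
`p(n) ≥ p(0) + n = n + 1`. -/

namespace Coding

variable {α : Type*}

def window (s : ℕ → α) (k n : ℕ) : List α :=
  (List.range n).map fun j => s (k + j)

def factors (S : Set (ℕ → α)) (n : ℕ) : Set (List α) :=
  {w | ∃ s ∈ S, ∃ k, window s k n = w}

lemma window_succ (s : ℕ → α) (k n : ℕ) :
    window s k (n + 1) = window s k n ++ [s (k + n)] := by
  simp [window, List.range_succ]

lemma window_length (s : ℕ → α) (k n : ℕ) : (window s k n).length = n := by
  simp [window]

lemma take_window_succ (s : ℕ → α) (k n : ℕ) :
    (window s k (n + 1)).take n = window s k n := by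
  rw [window_succ, List.take_left' (window_length s k n)]

lemma factors_finite [Finite α] (S : Set (ℕ → α)) (n : ℕ) : (factors S n).Finite :=
  (List.finite_length_eq α n).subset <| by
    rintro _ ⟨s, -, k, rfl⟩
    exact window_length s k n

lemma image_take_factors_succ (S : Set (ℕ → α)) (n : ℕ) :
    List.take n '' factors S (n + 1) = factors S n := by
  ext w
  constructor
  · rintro ⟨_, ⟨s, hs, k, rfl⟩, rfl⟩
    exact ⟨s, hs, k, (take_window_succ s k n).symm⟩
  · rintro ⟨s, hs, k, rfl⟩
    exact ⟨_, ⟨s, hs, k, rfl⟩, take_window_succ s k n⟩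

lemma ncard_factors_le_succ [Finite α] (S : Set (ℕ → α)) (n : ℕ) :
    (factors S n).ncard ≤ (factors S (n + 1)).ncard := by
  rw [← image_take_factors_succ]
  exact Set.ncard_image_le (factors_finite S _)

/-- `hinj` says that every factor of length `n` has a unique right extension. -/
lemma eq_of_injOn_take {S : Set (ℕ → α)} {n : ℕ}
    (hinj : (factors S (n + 1)).InjOn (List.take n))
    {s t : ℕ → α} (hs : s ∈ S) (ht : t ∈ S) (hst : ∀ j < n, s j = t j) : s = t := by
  funext k
  induction k using Nat.strong_induction_on with
  | _ k ih =>
    obtain hk | hk := lt_or_ge k n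
    · exact hst k hk
    obtain ⟨i, rfl⟩ := Nat.exists_eq_add_of_le' hk
    have hwin : window s i n = window t i n :=
      List.map_inj_left.mpr fun j hj => ih _ (by have := List.mem_range.mp hj; omega)
    have hext : window s i (n + 1) = window t i (n + 1) :=
      hinj ⟨s, hs, i, rfl⟩ ⟨t, ht, i, rfl⟩ <| by
        rw [take_window_succ, take_window_succ, hwin]
    rw [window_succ, window_succ] at hext
    simpa using (List.append_inj' hext rfl).2

/-- A form of the Morse–Hedlund theorem. -/
theorem strictMono_ncard_factors [Finite α] {S : Set (ℕ → α)} (hS : S.Infinite) :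
    StrictMono fun n => (factors S n).ncard := by
  refine strictMono_nat_of_lt_succ fun n => (ncard_factors_le_succ S n).lt_of_ne fun heq => hS ?_
  have hinj : (factors S (n + 1)).InjOn (List.take n) := by
    refine Set.injOn_of_ncard_image_eq ?_ (factors_finite S _)
    rw [image_take_factors_succ, heq]
  have hprefix : S.InjOn fun s (j : Fin n) => s j := fun s hs t ht hst =>
    eq_of_injOn_take hinj hs ht fun j hj => congrFun hst ⟨j, hj⟩
  exact Set.Finite.of_finite_image (Set.toFinite _) hprefix

lemma factors_zero {S : Set (ℕ → α)} (hS : S.Nonempty) : factors S 0 = {[]} := by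
  obtain ⟨s, hs⟩ := hS
  ext w
  simp only [factors, window, List.range_zero, List.map_nil, Set.mem_singleton_iff]
  exact ⟨fun ⟨_, _, _, h⟩ => h.symm, fun h => ⟨s, hs, 0, h.symm⟩⟩

end Coding

namespace PieceExchange

variable {T : ℝ × ℝ → ℝ × ℝ} {m : ℕ}

lemma complexity_eq_ncard_factors (E : PieceExchange T m) (n : ℕ) :
    E.complexity n = (Coding.factors (E.C '' E.domain) n).ncard := by
  unfold complexity Set.ncard
  congr
  ext w
  constructor
  · rintro ⟨⟨n, k, x, hx, rfl⟩, rfl⟩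
    exact ⟨_, ⟨x, hx, rfl⟩, k, by simp [Coding.window]⟩
  · rintro ⟨_, ⟨x, hx, rfl⟩, k, rfl⟩
    exact ⟨⟨n, k, x, hx, rfl⟩, by simp [Coding.window]⟩

lemma domain_nonempty (E : PieceExchange T m) : E.domain.Nonempty :=
  nonempty_of_measure_ne_zero (by rw [domain, E.measure_union]; exact one_ne_zero)

lemma infinite_codings (E : PieceExchange T m) (hE : E.Conjugate) : (E.C '' E.domain).Infinite := by
  intro hfin
  set U := {x | x ∈ E.domain ∧ ¬ ∃ y ∈ E.domain, y ≠ x ∧ E.C y = E.C x}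
  set V := {x | x ∈ E.domain ∧ ∃ y ∈ E.domain, y ≠ x ∧ E.C y = E.C x}
  have hU : U.Finite := hfin.subset (Set.image_mono fun x hx => hx.1) |>.of_finite_image
    fun x hx y hy hxy => by_contra fun hne => hx.2 ⟨y, hy.1, Ne.symm hne, hxy.symm⟩
  have hsub : E.domain ⊆ U ∪ V :=
    fun x hx => (em _).elim (fun h => Or.inr ⟨hx, h⟩) fun h => Or.inl ⟨hx, h⟩
  have hnull : volume E.domain = 0 :=
    measure_mono_null hsub (measure_union_null (hU.countable.measure_zero _) hE)
  simp [domain, E.measure_union] at hnull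

lemma strictMono_complexity (E : PieceExchange T m) (hE : E.Conjugate) :
    StrictMono E.complexity := by
  rw [funext E.complexity_eq_ncard_factors]
  exact Coding.strictMono_ncard_factors (E.infinite_codings hE)

lemma complexity_zero (E : PieceExchange T m) : E.complexity 0 = 1 := by
  rw [complexity_eq_ncard_factors, Coding.factors_zero (E.domain_nonempty.image _),
    Set.ncard_singleton]

lemma add_one_le_complexity (E : PieceExchange T m) (hE : E.Conjugate) (n : ℕ) :
    n + 1 ≤ E.complexity n := by
  simpa [complexity_zero] using (E.strictMono_complexity hE).add_le_nat n 0

end PieceExchange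

lemma complexityFn_le {T : ℝ × ℝ → ℝ × ℝ} {m : ℕ} (E : PieceExchange T m)
    (hE : E.Conjugate) (n : ℕ) : complexityFn T n ≤ E.complexity n :=
  iInf_le_of_le m <| iInf_le_of_le E <| iInf_le _ hE

lemma le_complexityFn {T : ℝ × ℝ → ℝ × ℝ} {n : ℕ} {a : ℕ∞}
    (h : ∀ (m : ℕ) (E : PieceExchange T m), E.Conjugate → a ≤ E.complexity n) :
    a ≤ complexityFn T n :=
  le_iInf fun m => le_iInf fun E => le_iInf (h m E)

lemma complexityFn_add_one_le (T : ℝ × ℝ → ℝ × ℝ) (n : ℕ) :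
    complexityFn T n + 1 ≤ complexityFn T (n + 1) :=
  le_complexityFn fun _ E hE => by
    grw [complexityFn_le E hE n]
    exact_mod_cast E.strictMono_complexity hE n.lt_add_one

theorem complexity_strictMono_of_totallyErgodic_general
    (T : ℝ × ℝ → ℝ × ℝ)
    (hex : ∃ (m : ℕ) (E : PieceExchange T m), E.Conjugate) :
    (∀ (m : ℕ) (E : PieceExchange T m), E.Conjugate → StrictMono E.complexity) ∧
    StrictMono (complexityFn T) ∧
    (∀ n : ℕ, 1 ≤ n → (n + 1 : ℕ∞) ≤ complexityFn T n) := by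
  obtain ⟨m, E, hE⟩ := hex
  have hfinite (n : ℕ) : complexityFn T n ≠ ⊤ :=
    ne_top_of_le_ne_top (ENat.natCast_ne_top _) (complexityFn_le E hE n)
  refine ⟨fun _ E hE => E.strictMono_complexity hE,
    strictMono_nat_of_lt_succ fun n => ?_, fun n _ => ?_⟩
  · exact ((ENat.lt_add_one_iff (hfinite n)).mpr le_rfl).trans_le (complexityFn_add_one_le T n)
  · exact le_complexityFn fun _ E hE => mod_cast E.add_one_le_complexity hE n

/-- Let `T` be a measurable, almost surely `ℤ²`-periodic, Lebesgue-measure-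
preserving map of the plane whose induced system `Tbar` on the torus is totally ergodic, and
suppose there exists an exchange of pieces conjugate to `T`.  Then the complexity function of
every exchange of pieces conjugate to `T` is strictly increasing; consequently the complexity
function associated to `T` is strictly increasing and satisfies `p^T(n) ≥ n + 1` for `n ≥ 1`. -/
theorem complexity_strictMono_of_totallyErgodic
    (T : ℝ × ℝ → ℝ × ℝ) (hmeas : Measurable T)
    (hpres : MeasurePreserving T volume volume)
    (hper : volume {x : ℝ × ℝ | ¬ ∀ a b : ℤ, ∃ c d : ℤ,
        T (x + ((a : ℝ), (b : ℝ))) = T x + ((c : ℝ), (d : ℝ))} = 0)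
    (Tbar : Torus → Torus)
    (hcompat : ∀ᵐ x ∂(volume : Measure (ℝ × ℝ)), torusProj (T x) = Tbar (torusProj x))
    (htot : ∀ k : ℕ, 1 ≤ k → Ergodic (Tbar^[k]) volume)
    (hex : ∃ (m : ℕ) (E : PieceExchange T m), E.Conjugate) :
    (∀ (m : ℕ) (E : PieceExchange T m), E.Conjugate → StrictMono E.complexity) ∧
    StrictMono (complexityFn T) ∧
    (∀ n : ℕ, 1 ≤ n → (n + 1 : ℕ∞) ≤ complexityFn T n) :=
  complexity_strictMono_of_totallyErgodic_general T hex

end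
end

section
/- Let φ = (1+√5)/2, T_φ(x,y) = (x + 1/φ², y + x − 1/(2φ³)), and ψ⁻¹(x,y) = (−x/φ, −y − x²/(2φ) + x/(2φ²)). Then for all (x,y) ∈ ℝ²: T_φ(ψ⁻¹(x,y)) = ψ⁻¹(T_φ(x,y) − (1,0)). -/
/-! After clearing denominators, each coordinate of `T_φ ∘ ψ⁻¹` and of `ψ⁻¹ ∘ (T_φ − (1, 0))`
differs by a polynomial multiple of `φ² − φ − 1`. -/

noncomputable section

/-- The golden ratio. -/
def φ : ℝ := (1 + Real.sqrt 5) / 2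

/-- The affine nilsystem `T_φ (x, y) = (x + 1/φ², y + x − 1/(2φ³))`. -/
def Tφ : ℝ × ℝ → ℝ × ℝ := fun x => (x.1 + 1 / φ ^ 2, x.2 + x.1 - 1 / (2 * φ ^ 3))

/-- The inverse of the renormalizing map `ψ (x,y) = (−φx, −y − φx²/2 + φ²x/2)`. -/
def ψinv : ℝ × ℝ → ℝ × ℝ :=
  fun x => (-x.1 / φ, -x.2 - x.1 ^ 2 / (2 * φ) + x.1 / (2 * φ ^ 2))

theorem φ_sq : φ ^ 2 = φ + 1 := Real.goldenRatio_sq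

theorem φ_ne_zero : φ ≠ 0 := Real.goldenRatio_ne_zero

/-- For all `(x, y) ∈ ℝ²`, `T_φ(ψ⁻¹(x,y)) = ψ⁻¹(T_φ(x,y) − (1,0))`. -/
theorem Tphi_psiInv_commutation (x y : ℝ) :
    Tφ (ψinv (x, y)) = ψinv (Tφ (x, y) - (1, 0)) := by
  have hφ := φ_ne_zero
  simp only [Tφ, ψinv, Prod.mk_sub_mk, Prod.mk.injEq]
  constructor
  · field_simp
    linear_combination -φ_sq
  · field_simp
    linear_combination (2 * x * φ ^ 2 * (φ - 1) + φ ^ 2 + 2 * φ - 1) * φ_sq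

end
end

section
/- Let φ = (1+√5)/2, T_φ(x,y) = (x + 1/φ², y + x − 1/(2φ³)), and ψ⁻¹(x,y) = (−x/φ, −y − x²/(2φ) + x/(2φ²)). Then for all (x,y) ∈ ℝ²: T_φ(T_φ(ψ⁻¹(x,y))) − (1,0) = ψ⁻¹(T_φ(x,y)). -/
noncomputable section

theorem φ_cube : φ ^ 3 = 2 * φ + 1 := by
  linear_combination (φ + 1) * φ_sq

theorem Tφ_sq_psiInv_fst (x y : ℝ) :
    (Tφ (Tφ (ψinv (x, y)))).1 - 1 = (ψinv (Tφ (x, y))).1 := by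
  simp only [Tφ, ψinv]
  field_simp [φ_ne_zero]
  linear_combination -φ_cube

theorem Tφ_sq_psiInv_snd (x y : ℝ) :
    (Tφ (Tφ (ψinv (x, y)))).2 = (ψinv (Tφ (x, y))).2 := by
  simp only [Tφ, ψinv]
  field_simp [φ_ne_zero]
  linear_combination (2 * φ ^ 2 * (φ - 1) * x + 2 * φ - 1) * φ_sq

/-- For all `(x, y) ∈ ℝ²`, `T_φ(T_φ(ψ⁻¹(x,y))) − (1,0) = ψ⁻¹(T_φ(x,y))`. -/
theorem Tphi_sq_psiInv_commutation (x y : ℝ) :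
    Tφ (Tφ (ψinv (x, y))) - (1, 0) = ψinv (Tφ (x, y)) := by
  ext
  · exact Tφ_sq_psiInv_fst x y
  · simpa using Tφ_sq_psiInv_snd x y

end
end

section
/- (Cassaigne) Let σ be the Fibonacci substitution on {1,2} (σ(1) = 12, σ(2) = 1) and let L^φ be the factorial language generated by the Fibonacci word, the fixed point of σ. For any factorial language 𝔏 ⊆ {1,2}* containing the letters 1 and 2, define 𝔏₀ = 𝔏 and 𝔏_{N+1} = 𝓛(σ(𝔏_N)) for all N ≥ 0. Then the sequence (𝔏_N) converges to L^φ in the following sense: for every integer M there exists N₀ such that for all N ≥ N₀, the set of words of 𝔏_N of length at most M equals the set of words of L^φ of length at most M. -/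
/-!
Every word of `𝔏_{n+1}` is a factor of some `σⁿ⁺¹(w)`, a concatenation of blocks `σⁿ⁺¹(a)`
of length at least `F(n+2)`. A factor of length at most `F(n+2)` meets at most two consecutive
blocks, so it is a factor of `σⁿ(σ(v))` with `|v| ≤ 2`. Although `22` is not a factor of the
Fibonacci word, `σ(v)` is one for every such `v`, and the factors of the Fibonacci word are
closed under `σ`. Conversely, `σᴺ(1)` is a prefix of the Fibonacci word lying in `𝔏_N`, and
every factor of the Fibonacci word occurs in a long enough prefix.
-/

/-- The Fibonacci substitution `σ` on the alphabet `Fin 2` (`0` plays the role of the letter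
`1` and `1` the role of the letter `2`): `σ(1) = 12`, `σ(2) = 1`. -/
def fibSub : Fin 2 → List (Fin 2) := fun a => if a = 0 then [0, 1] else [0]

/-- The Fibonacci substitution extended to words by concatenation. -/
def sigmaWord (w : List (Fin 2)) : List (Fin 2) := w.flatMap fibSub

/-- The factorial language `𝓛(L)` generated by a language `L`: all factors (contiguous
subwords) of words of `L`. -/
def FactorialClosure (L : Set (List (Fin 2))) : Set (List (Fin 2)) :=
  {u | ∃ v ∈ L, u <:+: v}

/-- The prefix of length `n` of an infinite word `W`. -/
def prefixWord (W : ℕ → Fin 2) (n : ℕ) : List (Fin 2) := (List.range n).map W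

/-- `W` is the Fibonacci word: the infinite fixed point of the Fibonacci substitution
beginning with the letter `1` (coded by `0 : Fin 2`). -/
def IsFibWord (W : ℕ → Fin 2) : Prop :=
  W 0 = 0 ∧
  ∀ n : ℕ, sigmaWord (prefixWord W n) = prefixWord W (sigmaWord (prefixWord W n)).length

/-- The factorial language of factors of an infinite word `W`. -/
def factorLang (W : ℕ → Fin 2) : Set (List (Fin 2)) :=
  {u | ∃ k : ℕ, u = (List.range u.length).map fun j => W (k + j)}

/-- The iterated languages `𝔏₀ = 𝔏`, `𝔏_{N+1} = 𝓛(σ(𝔏_N))`. -/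
def iterLang (L : Set (List (Fin 2))) : ℕ → Set (List (Fin 2))
  | 0 => L
  | N + 1 => FactorialClosure (sigmaWord '' iterLang L N)

open Filter

theorem List.exists_length_le_two_infix_flatMap {α β : Type*} {f : α → List β} {m : ℕ}
    (hf : ∀ a, m ≤ (f a).length) {u : List β} (hu : u.length ≤ m) {w : List α}
    (h : u <:+: w.flatMap f) : ∃ v : List α, v.length ≤ 2 ∧ u <:+: v.flatMap f := by
  induction w with
  | nil => exact ⟨[], by simp, h⟩
  | cons a t ih =>
    rw [List.flatMap_cons, List.infix_append_iff] at h
    rcases h with h | h | ⟨l₁, l₂, rfl, hl₁, hl₂⟩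
    · exact ⟨[a], by simp, by simpa using h⟩
    · exact ih h
    · have hl₂' : l₂ <+: (t.take 1).flatMap f := by
        cases t with
        | nil => simpa using hl₂
        | cons b t =>
          rw [List.flatMap_cons] at hl₂
          have hlen : l₂.length ≤ (f b).length := by
            have := hf b
            simp only [List.length_append] at hu
            omega
          simpa using List.prefix_of_prefix_length_le hl₂ (List.prefix_append _ _) hlen
      refine ⟨a :: t.take 1, by simp, ?_⟩
      rw [List.flatMap_cons]
      exact List.infix_append_iff.2 (Or.inr (Or.inr ⟨l₁, l₂, rfl, hl₁, hl₂'⟩))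

theorem sigmaWord_iterate_append (n : ℕ) (x y : List (Fin 2)) :
    sigmaWord^[n] (x ++ y) = sigmaWord^[n] x ++ sigmaWord^[n] y := by
  induction n generalizing x y with
  | zero => rfl
  | succ n ih => simp only [Function.iterate_succ_apply, sigmaWord, List.flatMap_append, ih]

theorem sigmaWord_iterate_eq_flatMap (n : ℕ) (w : List (Fin 2)) :
    sigmaWord^[n] w = w.flatMap fun a => sigmaWord^[n] [a] := by
  induction w with
  | nil => exact Function.iterate_fixed rfl n
  | cons a t ih => rw [← List.singleton_append, sigmaWord_iterate_append, ih]; rfl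

theorem sigmaWord_iterate_infix (n : ℕ) {u v : List (Fin 2)} (h : u <:+: v) :
    sigmaWord^[n] u <:+: sigmaWord^[n] v := by
  rw [sigmaWord_iterate_eq_flatMap, sigmaWord_iterate_eq_flatMap n v]
  exact h.flatMap _

theorem sigmaWord_iterate_succ_zero (n : ℕ) :
    sigmaWord^[n + 1] [0] = sigmaWord^[n] [0] ++ sigmaWord^[n] [1] := by
  rw [Function.iterate_succ_apply, ← sigmaWord_iterate_append]; rfl

theorem sigmaWord_iterate_succ_one (n : ℕ) : sigmaWord^[n + 1] [1] = sigmaWord^[n] [0] :=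
  Function.iterate_succ_apply _ _ _

theorem length_sigmaWord_iterate_zero_one (n : ℕ) :
    (sigmaWord^[n] [0]).length = Nat.fib (n + 2) ∧
      (sigmaWord^[n] [1]).length = Nat.fib (n + 1) := by
  induction n with
  | zero => exact ⟨rfl, rfl⟩
  | succ n ih =>
    rw [sigmaWord_iterate_succ_zero, sigmaWord_iterate_succ_one, List.length_append, ih.1, ih.2,
      Nat.fib_add_two (n := n + 1)]
    exact ⟨Nat.add_comm _ _, rfl⟩

theorem fib_succ_le_length_sigmaWord_iterate (n : ℕ) (a : Fin 2) :
    Nat.fib (n + 1) ≤ (sigmaWord^[n] [a]).length := by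
  fin_cases a
  · exact (length_sigmaWord_iterate_zero_one n).1 ▸ Nat.fib_mono (Nat.le_succ _)
  · exact (length_sigmaWord_iterate_zero_one n).2.ge

theorem sigmaWord_infix_of_length_le_two {v : List (Fin 2)} (hv : v.length ≤ 2) :
    sigmaWord v <:+: sigmaWord^[4] [0] := by
  match v, hv with
  | [], _ => exact List.nil_infix
  | [a], _ => revert a; decide
  | [a, b], _ => revert a b; decide

theorem prefixWord_isPrefix_of_le (W : ℕ → Fin 2) {m n : ℕ} (h : m ≤ n) :
    prefixWord W m <+: prefixWord W n := by
  obtain ⟨k, rfl⟩ := Nat.exists_eq_add_of_le h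
  simp [prefixWord, List.range_add]

theorem mem_factorLang_iff_infix_prefixWord {W : ℕ → Fin 2} {u : List (Fin 2)} :
    u ∈ factorLang W ↔ ∃ n, u <:+: prefixWord W n := by
  constructor
  · rintro ⟨k, hk⟩
    refine ⟨k + u.length, prefixWord W k, [], ?_⟩
    simp only [prefixWord, List.range_add, List.map_append, List.map_map, List.append_nil]
    exact congrArg _ hk
  · rintro ⟨n, h⟩
    obtain ⟨k, hk, hget⟩ := List.infix_iff_getElem?.1 h
    refine ⟨k, List.ext_getElem (by simp) fun i hi _ => ?_⟩
    have hin : i + k < n := by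
      simp only [prefixWord, List.length_map, List.length_range] at hk
      omega
    have := hget i hi
    simp only [prefixWord, List.getElem?_map, List.getElem?_range hin, Option.map_some,
      Option.some.injEq] at this
    simp [← this, Nat.add_comm]

section iterLang

variable {L : Set (List (Fin 2))}

theorem exists_infix_sigmaWord_iterate_of_mem_iterLang {n : ℕ} {u : List (Fin 2)}
    (hu : u ∈ iterLang L n) : ∃ w ∈ L, u <:+: sigmaWord^[n] w := by
  induction n generalizing u with
  | zero => exact ⟨u, hu, List.infix_refl u⟩
  | succ n ih =>
    obtain ⟨_, ⟨v, hv, rfl⟩, huv⟩ := hu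
    obtain ⟨w, hw, hvw⟩ := ih hv
    refine ⟨w, hw, huv.trans ?_⟩
    rw [Function.iterate_succ_apply' sigmaWord n w]
    exact hvw.flatMap fibSub

theorem sigmaWord_iterate_mem_iterLang {w : List (Fin 2)} (hw : w ∈ L) (n : ℕ) :
    sigmaWord^[n] w ∈ iterLang L n := by
  induction n with
  | zero => exact hw
  | succ n ih =>
    rw [Function.iterate_succ_apply']
    exact ⟨_, ⟨_, ih, rfl⟩, List.infix_refl _⟩

theorem mem_iterLang_succ_of_infix {n : ℕ} {u v : List (Fin 2)} (huv : u <:+: v)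
    (hv : v ∈ iterLang L (n + 1)) : u ∈ iterLang L (n + 1) :=
  let ⟨x, hx, hvx⟩ := hv
  ⟨x, hx, huv.trans hvx⟩

end iterLang

namespace IsFibWord

variable {W : ℕ → Fin 2} {L : Set (List (Fin 2))}

theorem sigmaWord_iterate_zero_eq_prefixWord (hW : IsFibWord W) (n : ℕ) :
    sigmaWord^[n] [0] = prefixWord W (Nat.fib (n + 2)) := by
  induction n with
  | zero => simp [prefixWord, hW.1]
  | succ n ih =>
    rw [← (length_sigmaWord_iterate_zero_one (n + 1)).1, Function.iterate_succ_apply', ih]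
    exact hW.2 _

theorem mem_factorLang_of_mem_iterLang (hW : IsFibWord W) {n : ℕ} {u : List (Fin 2)}
    (hu : u ∈ iterLang L (n + 1)) (hlen : u.length ≤ Nat.fib (n + 2)) : u ∈ factorLang W := by
  obtain ⟨w, -, huw⟩ := exists_infix_sigmaWord_iterate_of_mem_iterLang hu
  rw [sigmaWord_iterate_eq_flatMap] at huw
  obtain ⟨v, hv, huv⟩ := List.exists_length_le_two_infix_flatMap
    (fib_succ_le_length_sigmaWord_iterate (n + 1)) hlen huw
  rw [← sigmaWord_iterate_eq_flatMap, Function.iterate_succ_apply] at huv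
  have hσv : sigmaWord^[n] (sigmaWord v) <:+: prefixWord W (Nat.fib (n + 4 + 2)) := by
    rw [← hW.sigmaWord_iterate_zero_eq_prefixWord, Function.iterate_add_apply]
    exact sigmaWord_iterate_infix n (sigmaWord_infix_of_length_le_two hv)
  exact mem_factorLang_iff_infix_prefixWord.2 ⟨_, huv.trans hσv⟩

theorem eventually_mem_iterLang (hW : IsFibWord W) (h0 : [0] ∈ L) {u : List (Fin 2)}
    (hu : u ∈ factorLang W) : ∀ᶠ N in atTop, u ∈ iterLang L N := by
  obtain ⟨P, hP⟩ := mem_factorLang_iff_infix_prefixWord.1 hu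
  filter_upwards [eventually_ge_atTop (P + 1)] with N hN
  obtain ⟨n, rfl⟩ : ∃ n, N = n + 1 := ⟨N - 1, by omega⟩
  have hPn : P ≤ Nat.fib (n + 1 + 2) := by
    have : n + 1 ≤ Nat.fib (n + 1 + 2) := Nat.fib_add_two_strictMono.id_le (n + 1)
    omega
  have hprefix := prefixWord_isPrefix_of_le W hPn
  rw [← hW.sigmaWord_iterate_zero_eq_prefixWord] at hprefix
  exact mem_iterLang_succ_of_infix (hP.trans hprefix.isInfix)
    (sigmaWord_iterate_mem_iterLang h0 _)

end IsFibWord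

theorem cassaigne_convergence_general (W : ℕ → Fin 2) (hW : IsFibWord W)
    (L : Set (List (Fin 2)))
    (h1 : [0] ∈ L) :
    ∀ M : ℕ, ∃ N₀ : ℕ, ∀ N : ℕ, N₀ ≤ N →
      {u | u ∈ iterLang L N ∧ u.length ≤ M} = {u | u ∈ factorLang W ∧ u.length ≤ M} := by
  intro M
  have hshort_mem : ∀ᶠ N in atTop, ∀ u ∈ iterLang L N, u.length ≤ M → u ∈ factorLang W := by
    filter_upwards [eventually_ge_atTop (M + 1)] with N hN u hu hlen
    obtain ⟨n, rfl⟩ : ∃ n, N = n + 1 := ⟨N - 1, by omega⟩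
    have : n ≤ Nat.fib (n + 2) := Nat.fib_add_two_strictMono.id_le n
    exact hW.mem_factorLang_of_mem_iterLang hu (by omega)
  have hfinite : {u | u ∈ factorLang W ∧ u.length ≤ M}.Finite :=
    (List.finite_length_le (Fin 2) M).subset fun _ hu => hu.2
  have hshort_factor : ∀ᶠ N in atTop, ∀ u ∈ {u | u ∈ factorLang W ∧ u.length ≤ M},
      u ∈ iterLang L N :=
    hfinite.eventually_all.2 fun u hu => hW.eventually_mem_iterLang h1 hu.1
  obtain ⟨N₀, hN₀⟩ := eventually_atTop.1 (hshort_mem.and hshort_factor)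
  exact ⟨N₀, fun N hN => Set.ext fun u =>
    ⟨fun hu => ⟨(hN₀ N hN).1 u hu.1 hu.2, hu.2⟩, fun hu => ⟨(hN₀ N hN).2 u hu, hu.2⟩⟩⟩

/-- **Cassaigne.** Let `W` be the Fibonacci word (the infinite fixed point of
the Fibonacci substitution beginning with `1`), and let `𝔏` be any factorial language
containing the two letters.  Defining `𝔏₀ = 𝔏` and `𝔏_{N+1} = 𝓛(σ(𝔏_N))`, the sequence
`(𝔏_N)` converges to the factor language of `W`: for every `M` there is `N₀` such that for all
`N ≥ N₀` the words of length at most `M` of `𝔏_N` are exactly those of the factor language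
of the Fibonacci word. -/
theorem cassaigne_convergence (W : ℕ → Fin 2) (hW : IsFibWord W)
    (L : Set (List (Fin 2)))
    (hfac : ∀ u v : List (Fin 2), v ∈ L → u <:+: v → u ∈ L)
    (h1 : [0] ∈ L) (h2 : [1] ∈ L) :
    ∀ M : ℕ, ∃ N₀ : ℕ, ∀ N : ℕ, N₀ ≤ N →
      {u | u ∈ iterLang L N ∧ u.length ≤ M} = {u | u ∈ factorLang W ∧ u.length ≤ M} :=
  cassaigne_convergence_general W hW L h1
end
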